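/- arXiv:2411.03529 — 8 statements merged into one kernel-verified Lean document; each statement's English description precedes it below -/
import Mathlib

section
/- Let G be a group acting continuously and minimally on a compact metric space X, and m ≥ 2. If the set of m-equicontinuity points E^m(X,G) is dense in X (equivalently, residual), then E^m(X,G) = X, i.e., the action is m-equicontinuous. -/
open Metric

/-- `x` is an `m`-equicontinuity point for the action of `G` on `X`. -/
def IsEqPoint (G : Type*) {X : Type*} [Group G] [MetricSpace X] [MulAction G X]
    (m : ℕ) (x : X) : Prop :=
  ∀ ε > (0:ℝ), ∃ δ > (0:ℝ), ∀ xs : Fin m → X, (∀ i, dist (xs i) x < δ) →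
    ∀ g : G, ∃ i j, i ≠ j ∧ dist (g • xs i) (g • xs j) < ε

/-- For minimal actions, density of the set of `m`-equicontinuity points implies
`m`-equicontinuity. -/
theorem mEquicontinuous_of_dense_eqPoints {G X : Type*} [Group G] [TopologicalSpace G]
    [MetricSpace X] [CompactSpace X] [MulAction G X] [ContinuousSMul G X]
    [MulAction.IsMinimal G X] (m : ℕ) (hm : 2 ≤ m)
    (hdense : Dense {x : X | IsEqPoint G m x}) :
    ∀ x : X, IsEqPoint G m x := by
  intro x ε hε
  obtain ⟨y, hy, -⟩ := hdense.exists_dist_lt x zero_lt_one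
  obtain ⟨δ, hδ, hδ'⟩ := hy ε hε
  obtain ⟨z, hz, hdz⟩ := (MulAction.dense_orbit G x).exists_dist_lt y (half_pos hδ)
  obtain ⟨g, rfl⟩ := hz
  have hc : ContinuousAt (fun p : X => g • p) x := (continuous_const_smul g).continuousAt
  rw [Metric.continuousAt_iff] at hc
  obtain ⟨δ', hδ'pos, hδ'prop⟩ := hc (δ / 2) (half_pos hδ)
  refine ⟨δ', hδ'pos, fun xs hxs h => ?_⟩
  have key : ∀ i, dist (g • xs i) y < δ := by
    intro i
    have h1 : dist (g • xs i) (g • x) < δ / 2 := hδ'prop (hxs i)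
    calc dist (g • xs i) y ≤ dist (g • xs i) (g • x) + dist (g • x) y := dist_triangle _ _ _
      _ < δ / 2 + δ / 2 := add_lt_add h1 (by rwa [dist_comm] at hdz)
      _ = δ := add_halves δ
  obtain ⟨i, j, hij, hd⟩ := hδ' (fun i => g • xs i) key (h * g⁻¹)
  refine ⟨i, j, hij, ?_⟩
  simpa [smul_smul, inv_mul_cancel_right] using hd
end

section
/- Let G be a group acting continuously and minimally on a compact metric space X, and m ≥ 2. Then (X,G) is m-equicontinuous if and only if every m-regionally proximal tuple (x₁,…,x_m) ∈ Q_m(X,G) has two equal coordinates, i.e., Q_m(X,G) ⊆ Δ^(m)(X). -/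
open Metric

/-- `(x₁,…,x_m)` is an `m`-regionally proximal tuple. -/
def RegProxTuple (G : Type*) {X : Type*} [Group G] [MetricSpace X] [MulAction G X]
    (m : ℕ) (x : Fin m → X) : Prop :=
  ∀ ε > (0:ℝ), ∃ x' : Fin m → X, (∀ i, dist (x i) (x' i) < ε) ∧
    ∃ g : G, ∀ i j, dist (g • x' i) (g • x' j) < ε

/-! By compactness, `m`-equicontinuity at every point is uniform. For a regionally proximal tuple
`x`, the tuple `g • x'` then has all coordinates within `δ` of one another, so pulling back by
`g⁻¹` brings two coordinates of `x'`, hence of `x`, arbitrarily close; with finitely many pairs,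
two coordinates coincide. Conversely, if equicontinuity fails at `x`, there are `xₙ → x` and `gₙ`
with the coordinates of `gₙ • xₙ` pairwise `ε`-apart; a limit point of `gₙ • xₙ` is a regionally
proximal tuple whose coordinates are still pairwise `ε`-apart. -/

open Filter Topology

theorem exists_ne_eq_of_forall_exists_dist_lt {ι X : Type*} [Finite ι] [MetricSpace X]
    (x : ι → X) (h : ∀ ε > 0, ∃ i j, i ≠ j ∧ dist (x i) (x j) < ε) :
    ∃ i j, i ≠ j ∧ x i = x j := by
  by_contra! hx
  let d : {p : ι × ι // p.1 ≠ p.2} → ℝ := fun p => dist (x p.1.1) (x p.1.2)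
  obtain ⟨i, j, hij, -⟩ := h 1 one_pos
  have : Nonempty {p : ι × ι // p.1 ≠ p.2} := ⟨⟨(i, j), hij⟩⟩
  obtain ⟨p, hp⟩ := Finite.exists_min d
  obtain ⟨i, j, hij, hlt⟩ := h (d p) (dist_pos.2 (hx _ _ p.2))
  exact (hlt.trans_le (hp ⟨(i, j), hij⟩)).false

section

variable {G X : Type*} [Group G] [MetricSpace X] [MulAction G X] {m : ℕ}

theorem exists_uniform_delta_of_forall_isEqPoint [CompactSpace X]
    (H : ∀ x : X, IsEqPoint G m x) {ε : ℝ} (hε : 0 < ε) :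
    ∃ δ > 0, ∀ z : X, ∀ xs : Fin m → X, (∀ i, dist (xs i) z < δ) →
      ∀ g : G, ∃ i j, i ≠ j ∧ dist (g • xs i) (g • xs j) < ε := by
  choose δ hδ hδε using fun y : X => H y ε hε
  obtain ⟨η, hη, hball⟩ := lebesgue_number_lemma_of_metric isCompact_univ
    (fun y => isOpen_ball) (fun z _ => Set.mem_iUnion.2 ⟨z, mem_ball_self (hδ z)⟩)
  refine ⟨η, hη, fun z xs hxs => ?_⟩
  obtain ⟨y, hy⟩ := hball z (Set.mem_univ z)
  exact hδε y xs fun i => hy (hxs i)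

theorem RegProxTuple.exists_dist_lt_of_forall_isEqPoint [CompactSpace X]
    (H : ∀ x : X, IsEqPoint G m x) (hm : 0 < m) {x : Fin m → X} (hx : RegProxTuple G m x)
    {ε : ℝ} (hε : 0 < ε) : ∃ i j, i ≠ j ∧ dist (x i) (x j) < ε := by
  obtain ⟨δ, hδ, hδε⟩ := exists_uniform_delta_of_forall_isEqPoint H (by positivity : 0 < ε / 3)
  obtain ⟨x', hxx', g, hg⟩ := hx (min δ (ε / 3)) (lt_min hδ (by positivity))
  obtain ⟨i, j, hij, hx'⟩ := hδε (g • x' ⟨0, hm⟩) (fun i => g • x' i)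
    (fun i => (hg i _).trans_le (min_le_left _ _)) g⁻¹
  simp only [inv_smul_smul] at hx'
  refine ⟨i, j, hij, ?_⟩
  calc dist (x i) (x j) ≤ dist (x i) (x' i) + dist (x' i) (x' j) + dist (x' j) (x j) :=
        dist_triangle4 _ _ _ _
    _ < ε / 3 + ε / 3 + ε / 3 := by
        gcongr
        · exact (hxx' i).trans_le (min_le_right _ _)
        · rw [dist_comm]; exact (hxx' j).trans_le (min_le_right _ _)
    _ = ε := by ring

theorem RegProxTuple.of_tendsto {ι : Type*} {l : Filter ι} [l.NeBot] {y : Fin m → X}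
    {u : ι → Fin m → X} {g : ι → G} (hu : Tendsto u l (𝓝 y))
    (hg : ∀ ε > 0, ∀ᶠ n in l, ∀ i j, dist (g n • u n i) (g n • u n j) < ε) :
    RegProxTuple G m y := by
  intro ε hε
  obtain ⟨n, hn, hgn⟩ := ((Metric.tendsto_nhds.1 hu ε hε).and (hg ε hε)).exists
  refine ⟨u n, fun i => ?_, g n, hgn⟩
  rw [dist_comm]
  exact (dist_le_pi_dist _ _ i).trans_lt hn

theorem exists_regProxTuple_injective_of_not_isEqPoint [CompactSpace X] {x : X}
    (hx : ¬ IsEqPoint G m x) : ∃ y : Fin m → X, RegProxTuple G m y ∧ Function.Injective y := by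
  simp only [IsEqPoint, not_forall, not_exists, not_and, not_lt] at hx
  obtain ⟨ε, hε, hx⟩ := hx
  choose xs hxs g hg using fun n : ℕ => hx (1 / (n + 1)) Nat.one_div_pos_of_nat
  have hxs_lim : Tendsto xs atTop (𝓝 fun _ => x) := by
    refine tendsto_pi_nhds.2 fun i => tendsto_iff_dist_tendsto_zero.2 ?_
    exact squeeze_zero (fun n => dist_nonneg) (fun n => (hxs n i).le)
      tendsto_one_div_add_atTop_nhds_zero_nat
  obtain ⟨y, φ, hφ, hy⟩ := CompactSpace.tendsto_subseq fun n i => g n • xs n i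
  refine ⟨y, RegProxTuple.of_tendsto hy (g := fun n => (g (φ n))⁻¹) fun δ hδ => ?_, ?_⟩
  · filter_upwards [Metric.tendsto_nhds.1 (hxs_lim.comp hφ.tendsto_atTop) (δ / 2) (half_pos hδ)]
      with n hn i j
    simp only [Function.comp_apply, inv_smul_smul]
    calc dist (xs (φ n) i) (xs (φ n) j) ≤ dist (xs (φ n) i) x + dist x (xs (φ n) j) :=
          dist_triangle _ _ _
      _ < δ / 2 + δ / 2 := by
          rw [dist_comm x]
          gcongr <;> exact (dist_le_pi_dist _ (fun _ => x) _).trans_lt hn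
      _ = δ := by ring
  · intro i j hyij
    by_contra hij
    have hlim : ε ≤ dist (y i) (y j) :=
      ge_of_tendsto' (((continuous_apply i).tendsto y).comp hy |>.dist
        (((continuous_apply j).tendsto y).comp hy)) fun n => hg (φ n) i j hij
    rw [hyij, dist_self] at hlim
    exact hε.not_ge hlim

end

theorem mEquicontinuous_iff_regProxTuple_diag_general {G X : Type*} [Group G]
    [MetricSpace X] [CompactSpace X] [MulAction G X] (m : ℕ) (hm : 2 ≤ m) :
    (∀ x : X, IsEqPoint G m x) ↔
      ∀ x : Fin m → X, RegProxTuple G m x → ∃ i j, i ≠ j ∧ x i = x j := by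
  constructor
  · intro H x hx
    exact exists_ne_eq_of_forall_exists_dist_lt x fun ε hε =>
      hx.exists_dist_lt_of_forall_isEqPoint H (by omega) hε
  · intro H x
    by_contra hx
    obtain ⟨y, hy, hinj⟩ := exists_regProxTuple_injective_of_not_isEqPoint hx
    obtain ⟨i, j, hij, hyij⟩ := H y hy
    exact hij (hinj hyij)

/-- A minimal action is `m`-equicontinuous iff every `m`-regionally proximal tuple
has two equal coordinates. -/
theorem mEquicontinuous_iff_regProxTuple_diag {G X : Type*} [Group G] [TopologicalSpace G]
    [MetricSpace X] [CompactSpace X] [MulAction G X] [ContinuousSMul G X]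
    [MulAction.IsMinimal G X] (m : ℕ) (hm : 2 ≤ m) :
    (∀ x : X, IsEqPoint G m x) ↔
      ∀ x : Fin m → X, RegProxTuple G m x → ∃ i j, i ≠ j ∧ x i = x j :=
  mEquicontinuous_iff_regProxTuple_diag_general m hm
end

section
/- Let G be a group acting continuously and topologically transitively on a compact metric space X, and let m ≥ 2. Then the action is either m-sensitive or almost m-equicontinuous (the set of m-equicontinuity points is residual). -/
open Metric Pointwise

/-- The action of `G` on `X` is `m`-sensitive. -/
def MSensitive (G X : Type*) [Group G] [MetricSpace X] [MulAction G X] (m : ℕ) : Prop :=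
  ∃ ε > (0:ℝ), ∀ U : Set X, IsOpen U → U.Nonempty →
    ∃ xs : Fin m → X, (∀ i, xs i ∈ U) ∧ Function.Injective xs ∧
      ∃ g : G, ∀ i j, i ≠ j → ε ≤ dist (g • xs i) (g • xs j)

/-- A transitive action is either `m`-sensitive or almost `m`-equicontinuous
(the set of `m`-equicontinuity points is residual). -/
theorem mSensitive_or_residual_eqPoints {G X : Type*} [Group G] [TopologicalSpace G]
    [MetricSpace X] [CompactSpace X] [MulAction G X] [ContinuousSMul G X]
    (htrans : ∀ U V : Set X, IsOpen U → IsOpen V → U.Nonempty → V.Nonempty →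
      ∃ g : G, (U ∩ g • V).Nonempty)
    (m : ℕ) (hm : 2 ≤ m) :
    MSensitive G X m ∨ {x : X | IsEqPoint G m x} ∈ residual X := by
  classical
  set A : ℝ → Set X := fun ε => {x | ∃ δ > (0:ℝ), ∀ xs : Fin m → X,
    (∀ i, dist (xs i) x < δ) →
    ∀ g : G, ∃ i j, i ≠ j ∧ dist (g • xs i) (g • xs j) < ε} with hA
  have hopen : ∀ ε, IsOpen (A ε) := by
    intro ε
    rw [Metric.isOpen_iff]
    rintro x ⟨δ, hδ, h⟩
    refine ⟨δ / 2, by linarith, fun y hy => ⟨δ / 2, by linarith, fun xs hxs g => ?_⟩⟩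
    refine h xs (fun i => ?_) g
    rw [mem_ball] at hy
    calc dist (xs i) x ≤ dist (xs i) y + dist y x := dist_triangle _ _ _
      _ < δ := by have := hxs i; linarith
  by_cases hdense : ∀ ε > (0:ℝ), Dense (A ε)
  · right
    have hsub : (⋂ n : ℕ, A (1 / (n + 1))) ⊆ {x | IsEqPoint G m x} := by
      intro x hx ε hε
      obtain ⟨n, hn⟩ := exists_nat_one_div_lt hε
      obtain ⟨δ, hδ, h⟩ := Set.mem_iInter.mp hx n
      exact ⟨δ, hδ, fun xs hxs g => by
        obtain ⟨i, j, hij, hd⟩ := h xs hxs g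
        exact ⟨i, j, hij, hd.trans hn⟩⟩
    refine Filter.mem_of_superset ?_ hsub
    exact countable_iInter_mem.mpr fun n =>
      residual_of_dense_open (hopen _) (hdense _ (by positivity))
  · left
    push_neg at hdense
    obtain ⟨ε, hε, hnd⟩ := hdense
    rw [dense_iff_inter_open] at hnd
    push_neg at hnd
    obtain ⟨U, hU, hUne, hUA⟩ := hnd
    refine ⟨ε, hε, ?_⟩
    intro V hV hVne
    obtain ⟨g, z, hzV, hzgU⟩ := htrans V U hV hU hVne hUne
    set x : X := g⁻¹ • z with hx
    have hxU : x ∈ U := by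
      obtain ⟨u, huU, hu⟩ := hzgU
      rwa [hx, ← hu, inv_smul_smul]
    -- continuity of y ↦ g • y at x
    have hc : Continuous fun y : X => g • y := continuous_const_smul g
    have hpre : IsOpen ((fun y : X => g • y) ⁻¹' V) := hV.preimage hc
    have hxpre : x ∈ (fun y : X => g • y) ⁻¹' V := by
      simp only [Set.mem_preimage, hx, smul_inv_smul]; exact hzV
    rw [Metric.isOpen_iff] at hpre
    obtain ⟨δ₀, hδ₀, hball⟩ := hpre x hxpre
    have hxA : x ∉ A ε := fun hmem => by
      have : x ∈ U ∩ A ε := ⟨hxU, hmem⟩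
      rw [hUA] at this; exact this
    rw [hA] at hxA
    simp only [Set.mem_setOf_eq] at hxA
    push_neg at hxA
    obtain ⟨xs, hxs, h, hsep⟩ := hxA δ₀ hδ₀
    refine ⟨fun i => g • xs i, fun i => ?_, ?_, h * g⁻¹, fun i j hij => ?_⟩
    · exact hball (mem_ball.mpr (hxs i))
    · intro i j hijeq
      by_contra hne
      have h1 : xs i = xs j := smul_left_cancel g hijeq
      have := hsep i j hne
      rw [h1, dist_self] at this
      linarith
    · have e : ∀ k, (h * g⁻¹) • (g • xs k) = h • xs k := fun k => by
        rw [mul_smul, inv_smul_smul]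
      rw [e, e]
      exact hsep i j hij
end

section
/- Let G be a group acting continuously and minimally on compact metric spaces X and Y, and let φ : X → Y be a proximal factor map. If π : X → X_eq and π′ : Y → Y_eq are the maximal equicontinuous factor maps, then for any y₀ ∈ Y_eq and any points y₁,…,y_{k+1} ∈ π′⁻¹(y₀), where k = r_c(X,G), there exist i ≠ j such that (y_i, y_j) is a proximal pair in Y. Consequently r_c(Y,G) ≤ r_c(X,G). -/
open Metric

universe u

/-- A pair of points is proximal. -/
def Proximal (G : Type*) {X : Type*} [Group G] [MetricSpace X] [MulAction G X]
    (x y : X) : Prop :=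
  ∀ ε > (0:ℝ), ∃ g : G, dist (g • x) (g • y) < ε

/-- `φ` is a factor map of `G`-actions. -/
def IsFactorMap (G : Type*) {X Y : Type*} [Group G] [TopologicalSpace X]
    [TopologicalSpace Y] [MulAction G X] [MulAction G Y] (φ : X → Y) : Prop :=
  Continuous φ ∧ Function.Surjective φ ∧ ∀ (g : G) (x : X), φ (g • x) = g • φ x

/-- The action of `G` on `X` is equicontinuous. -/
def IsEquicontinuousAction (G X : Type*) [Group G] [MetricSpace X] [MulAction G X] : Prop :=
  ∀ ε > (0:ℝ), ∃ δ > (0:ℝ), ∀ x y : X, dist x y < δ → ∀ g : G, dist (g • x) (g • y) < ε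

/-- `π : X → Xeq` is the maximal equicontinuous factor map: it is an equicontinuous
factor of `(X,G)` through which every equicontinuous factor factors. -/
def IsMaxEqFactor (G : Type*) {X Xeq : Type u} [Group G] [MetricSpace X]
    [MetricSpace Xeq] [MulAction G X] [MulAction G Xeq] (π : X → Xeq) : Prop :=
  IsFactorMap G π ∧ IsEquicontinuousAction G Xeq ∧
    ∀ (Y : Type u) [MetricSpace Y] [MulAction G Y], ∀ ψ : X → Y,
      IsFactorMap G ψ → IsEquicontinuousAction G Y →
        ∃ θ : Xeq → Y, IsFactorMap G θ ∧ θ ∘ π = ψ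

lemma proximal_map {G X Y : Type*} [Group G] [MetricSpace X] [MetricSpace Y]
    [CompactSpace X] [MulAction G X] [MulAction G Y] (φ : X → Y)
    (hc : Continuous φ) (heq : ∀ (g : G) (x : X), φ (g • x) = g • φ x)
    {x x' : X} (h : Proximal G x x') : Proximal G (φ x) (φ x') := by
  intro ε hε
  obtain ⟨δ, hδ, hδ'⟩ := Metric.uniformContinuous_iff.mp
    (CompactSpace.uniformContinuous_of_continuous hc) ε hε
  obtain ⟨g, hg⟩ := h δ hδ
  exact ⟨g, by simpa [heq] using hδ' hg⟩

lemma proximal_eq_of_equic {G Z : Type*} [Group G] [MetricSpace Z] [MulAction G Z]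
    (he : IsEquicontinuousAction G Z)
    {a b : Z} (h : Proximal G a b) : a = b := by
  by_contra hne
  obtain ⟨δ, hδ, hδ'⟩ := he (dist a b) (dist_pos.mpr hne)
  obtain ⟨g, hg⟩ := h δ hδ
  have := hδ' _ _ hg g⁻¹
  simp at this

/-- If `φ : X → Y` is a proximal factor map between minimal actions and every
`k+1` points in a fiber of the maximal equicontinuous factor of `X` contain a
proximal pair (`k = r_c(X,G)`), then the same holds in `Y`: `r_c(Y,G) ≤ r_c(X,G)`. -/
theorem coincidenceRank_le_of_proximal_factor {G : Type*} [Group G] [TopologicalSpace G]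
    {X Y Xeq Yeq : Type u} [MetricSpace X] [MetricSpace Y] [MetricSpace Xeq]
    [MetricSpace Yeq] [CompactSpace X] [CompactSpace Y]
    [MulAction G X] [MulAction G Y] [MulAction G Xeq] [MulAction G Yeq]
    [ContinuousSMul G X] [ContinuousSMul G Y]
    [MulAction.IsMinimal G X] [MulAction.IsMinimal G Y]
    (φ : X → Y) (hφ : IsFactorMap G φ)
    (hprox : ∀ x x' : X, φ x = φ x' → Proximal G x x')
    (π : X → Xeq) (hπ : IsMaxEqFactor G π)
    (π' : Y → Yeq) (hπ' : IsMaxEqFactor G π')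
    (k : ℕ)
    (hk : ∀ xs : Fin (k + 1) → X, (∀ i, π (xs i) = π (xs 0)) →
      ∃ i j, i ≠ j ∧ Proximal G (xs i) (xs j)) :
    ∀ ys : Fin (k + 1) → Y, (∀ i, π' (ys i) = π' (ys 0)) →
      ∃ i j, i ≠ j ∧ Proximal G (ys i) (ys j) := by
  have hπconst : ∀ x x' : X, φ x = φ x' → π x = π x' := fun x x' h =>
    proximal_eq_of_equic hπ.2.1 (proximal_map π hπ.1.1 hπ.1.2.2 (hprox x x' h))
  have hsec : ∀ y : Y, ∃ x : X, φ x = y := hφ.2.1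
  set s : Y → X := fun y => (hsec y).choose with hs_def
  have hs : ∀ y, φ (s y) = y := fun y => (hsec y).choose_spec
  set η : Y → Xeq := fun y => π (s y) with hη_def
  have hηφ : ∀ x, η (φ x) = π x := fun x => hπconst _ _ (hs (φ x))
  have hq : Topology.IsQuotientMap φ := (hφ.1.isClosedMap).isQuotientMap hφ.1 hφ.2.1
  have hηc : Continuous η := by
    rw [hq.continuous_iff]
    have : η ∘ φ = π := funext hηφ
    rw [this]; exact hπ.1.1
  have hηs : Function.Surjective η := fun a => by
    obtain ⟨x, hx⟩ := hπ.1.2.1 a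
    exact ⟨φ x, by rw [hηφ, hx]⟩
  have hηe : ∀ (g : G) (y : Y), η (g • y) = g • η y := by
    intro g y
    have h1 : φ (g • s y) = g • y := by rw [hφ.2.2, hs]
    have h2 : π (s (g • y)) = π (g • s y) := hπconst _ _ (by rw [hs, h1])
    simp only [hη_def, h2, hπ.1.2.2]
  obtain ⟨θ, hθfac, hθcomp⟩ := hπ'.2.2 Xeq η ⟨hηc, hηs, hηe⟩ hπ.2.1
  intro ys hys
  set xs : Fin (k + 1) → X := fun i => s (ys i) with hxs_def
  have hfib : ∀ i, π (xs i) = π (xs 0) := by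
    intro i
    have h1 : ∀ i, π (xs i) = θ (π' (ys i)) := by
      intro i
      have := congrFun hθcomp (ys i)
      simp only [Function.comp_apply] at this
      simp only [hxs_def, hη_def] at this ⊢
      exact this.symm
    rw [h1 i, h1 0, hys i]
  obtain ⟨i, j, hij, hp⟩ := hk xs hfib
  refine ⟨i, j, hij, ?_⟩
  have := proximal_map φ hφ.1 hφ.2.2 hp
  simpa only [hxs_def, hs] using this
end

section
/- Let G be a group acting continuously and minimally on compact metric spaces X and Y, and suppose X is a proximal extension of Y via φ : X → Y. Then r_c(X,G) ≤ r_m(Y,G), where r_m denotes the minimal rank (infimum of fiber cardinalities of the maximal equicontinuous factor map). -/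
open Metric

universe u

section Aux

open Filter Topology

/-- Lifting proximality along a proximal extension. -/
lemma proximal_lift {G : Type*} [Group G] [TopologicalSpace G] {X Y : Type*}
    [MetricSpace X] [MetricSpace Y] [CompactSpace X] [MulAction G X] [MulAction G Y]
    [ContinuousSMul G X]
    (φ : X → Y) (hc : Continuous φ) (heq : ∀ (g : G) (x : X), φ (g • x) = g • φ x)
    (hprox : ∀ a b : X, φ a = φ b → Proximal G a b)
    (x x' : X) (h : Proximal G (φ x) (φ x')) : Proximal G x x' := by
  have H : ∀ n : ℕ, ∃ g : G, dist (g • φ x) (g • φ x') < 1 / ((n : ℝ) + 1) := by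
    intro n
    exact h _ (by positivity)
  choose hs hhs using H
  have hd0 : Tendsto (fun n : ℕ => dist (hs n • φ x) (hs n • φ x')) atTop (𝓝 0) :=
    squeeze_zero (fun n => dist_nonneg) (fun n => (hhs n).le)
      tendsto_one_div_add_atTop_nhds_zero_nat
  obtain ⟨a, -, σ₁, hσ₁, ha1⟩ :=
    IsCompact.tendsto_subseq (x := fun n : ℕ => hs n • x) isCompact_univ
      (fun n => Set.mem_univ _)
  obtain ⟨b, -, σ₂, hσ₂, hb1⟩ :=
    IsCompact.tendsto_subseq (x := fun n : ℕ => hs (σ₁ n) • x') isCompact_univ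
      (fun n => Set.mem_univ _)
  set τ : ℕ → ℕ := σ₁ ∘ σ₂ with hτ
  have hτmono : StrictMono τ := hσ₁.comp hσ₂
  have ha : Tendsto (fun n : ℕ => hs (τ n) • x) atTop (𝓝 a) :=
    ha1.comp hσ₂.tendsto_atTop
  have hb : Tendsto (fun n : ℕ => hs (τ n) • x') atTop (𝓝 b) := hb1
  -- φ a = φ b
  have hfa : Tendsto (fun n : ℕ => φ (hs (τ n) • x)) atTop (𝓝 (φ a)) :=
    (hc.tendsto a).comp ha
  have hfb : Tendsto (fun n : ℕ => φ (hs (τ n) • x')) atTop (𝓝 (φ b)) :=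
    (hc.tendsto b).comp hb
  have hdist : Tendsto (fun n : ℕ => dist (φ (hs (τ n) • x)) (φ (hs (τ n) • x')))
      atTop (𝓝 (dist (φ a) (φ b))) := hfa.dist hfb
  have hdist0 : Tendsto (fun n : ℕ => dist (φ (hs (τ n) • x)) (φ (hs (τ n) • x')))
      atTop (𝓝 0) := by
    have : (fun n : ℕ => dist (φ (hs (τ n) • x)) (φ (hs (τ n) • x')))
        = fun n : ℕ => dist (hs (τ n) • φ x) (hs (τ n) • φ x') := by
      funext n; rw [heq, heq]
    rw [this]
    exact hd0.comp hτmono.tendsto_atTop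
  have hab : φ a = φ b := dist_eq_zero.mp (tendsto_nhds_unique hdist hdist0)
  have hpab : Proximal G a b := hprox a b hab
  intro ε hε
  obtain ⟨g', hg'⟩ := hpab (ε / 3) (by positivity)
  have hga : Tendsto (fun n : ℕ => g' • (hs (τ n) • x)) atTop (𝓝 (g' • a)) :=
    ((continuous_const_smul g').tendsto a).comp ha
  have hgb : Tendsto (fun n : ℕ => g' • (hs (τ n) • x')) atTop (𝓝 (g' • b)) :=
    ((continuous_const_smul g').tendsto b).comp hb
  have e1 : ∀ᶠ n in atTop, dist (g' • (hs (τ n) • x)) (g' • a) < ε / 3 :=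
    Metric.tendsto_nhds.mp hga (ε / 3) (by positivity)
  have e2 : ∀ᶠ n in atTop, dist (g' • (hs (τ n) • x')) (g' • b) < ε / 3 :=
    Metric.tendsto_nhds.mp hgb (ε / 3) (by positivity)
  obtain ⟨n, hn1, hn2⟩ := (e1.and e2).exists
  refine ⟨g' * hs (τ n), ?_⟩
  rw [mul_smul, mul_smul]
  calc dist (g' • (hs (τ n) • x)) (g' • (hs (τ n) • x'))
      ≤ dist (g' • (hs (τ n) • x)) (g' • a) + dist (g' • a) (g' • b)
        + dist (g' • b) (g' • (hs (τ n) • x')) := dist_triangle4 _ _ _ _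
    _ < ε / 3 + ε / 3 + ε / 3 := by
        rw [dist_comm (g' • b)] at *
        linarith
    _ = ε := by ring

end Aux

/-- If `X` is a minimal proximal extension of `Y`, then `r_c(X,G) ≤ r_m(Y,G)`:
if some fiber of the maximal equicontinuous factor map of `Y` has at most `k`
points, then any `k+1` points in a fiber of the maximal equicontinuous factor
map of `X` contain a proximal pair. -/
theorem coincidenceRank_le_minRank {G : Type*} [Group G] [TopologicalSpace G]
    {X Y Xeq Yeq : Type u} [MetricSpace X] [MetricSpace Y] [MetricSpace Xeq]
    [MetricSpace Yeq] [CompactSpace X] [CompactSpace Y]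
    [MulAction G X] [MulAction G Y] [MulAction G Xeq] [MulAction G Yeq]
    [ContinuousSMul G X] [ContinuousSMul G Y]
    [MulAction.IsMinimal G X] [MulAction.IsMinimal G Y]
    (φ : X → Y) (hφ : IsFactorMap G φ)
    (hprox : ∀ x x' : X, φ x = φ x' → Proximal G x x')
    (π : X → Xeq) (hπ : IsMaxEqFactor G π)
    (π' : Y → Yeq) (hπ' : IsMaxEqFactor G π')
    (k : ℕ) (y₀ : Yeq) (hfin : (π' ⁻¹' {y₀}).Finite)
    (hcard : (π' ⁻¹' {y₀}).ncard ≤ k) :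
    ∀ xs : Fin (k + 1) → X, (∀ i, π (xs i) = π (xs 0)) →
      ∃ i j, i ≠ j ∧ Proximal G (xs i) (xs j) := by
  classical
  open Filter Topology in
  intro xs hxs
  -- factor π' ∘ φ through π
  have hψ : IsFactorMap G (π' ∘ φ) := by
    refine ⟨hπ'.1.1.comp hφ.1, hπ'.1.2.1.comp hφ.2.1, ?_⟩
    intro g x
    simp only [Function.comp_apply, hφ.2.2, hπ'.1.2.2]
  obtain ⟨θ, hθfac, hθ⟩ := hπ.2.2 Yeq (π' ∘ φ) hψ hπ'.2.1
  set z : Yeq := π' (φ (xs 0)) with hz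
  have hfib : ∀ i, π' (φ (xs i)) = z := by
    intro i
    have h1 : θ (π (xs i)) = π' (φ (xs i)) := congrFun hθ (xs i)
    have h2 : θ (π (xs 0)) = π' (φ (xs 0)) := congrFun hθ (xs 0)
    rw [hz, ← h1, ← h2, hxs i]
  -- density of orbit of z in Yeq
  have hdense : ∀ ε > (0:ℝ), ∃ g : G, dist (g • z) y₀ < ε := by
    intro ε hε
    obtain ⟨y₁, hy₁⟩ := hπ'.1.2.1 y₀
    -- continuity of π' at y₁
    obtain ⟨δ, hδ, hδε⟩ := (Metric.continuous_iff.mp hπ'.1.1) y₁ ε hε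
    have hdy : y₁ ∈ closure (MulAction.orbit G (φ (xs 0))) :=
      (MulAction.dense_orbit G (φ (xs 0))) y₁
    obtain ⟨p, hp, hdp⟩ := Metric.mem_closure_iff.mp hdy δ hδ
    obtain ⟨g, hg⟩ := hp
    refine ⟨g, ?_⟩
    have : π' p = g • z := by
      rw [← hg]
      simp only [hz, hπ'.1.2.2]
    rw [← this, ← hy₁]
    exact hδε p (by rwa [dist_comm])
  have H : ∀ n : ℕ, ∃ g : G, dist (g • z) y₀ < 1 / ((n : ℝ) + 1) :=
    fun n => hdense _ (by positivity)
  choose g hg using H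
  have hgz : Tendsto (fun n : ℕ => g n • z) atTop (𝓝 y₀) := by
    rw [tendsto_iff_dist_tendsto_zero]
    exact squeeze_zero (fun n => dist_nonneg) (fun n => (hg n).le)
      tendsto_one_div_add_atTop_nhds_zero_nat
  -- subsequence convergence of the orbit of the fiber points
  set u : ℕ → (Fin (k + 1) → Y) := fun n i => g n • φ (xs i) with hu
  obtain ⟨w, -, σ, hσ, hw⟩ :=
    IsCompact.tendsto_subseq (x := u) isCompact_univ (fun n => Set.mem_univ _)
  have hwc : ∀ i, Tendsto (fun n : ℕ => u (σ n) i) atTop (𝓝 (w i)) :=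
    tendsto_pi_nhds.mp hw
  -- each w i lies in the fiber over y₀
  have hwfib : ∀ i, w i ∈ π' ⁻¹' {y₀} := by
    intro i
    have h1 : Tendsto (fun n : ℕ => π' (u (σ n) i)) atTop (𝓝 (π' (w i))) :=
      (hπ'.1.1.tendsto (w i)).comp (hwc i)
    have h2 : (fun n : ℕ => π' (u (σ n) i)) = fun n : ℕ => g (σ n) • z := by
      funext n
      simp only [hu, hπ'.1.2.2, hfib i]
    rw [h2] at h1
    have h3 : Tendsto (fun n : ℕ => g (σ n) • z) atTop (𝓝 y₀) :=
      hgz.comp hσ.tendsto_atTop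
    exact tendsto_nhds_unique h1 h3
  -- pigeonhole: two of the limits coincide
  haveI : Fintype (π' ⁻¹' {y₀} : Set Y) := hfin.fintype
  obtain ⟨i, j, hij, hwij⟩ :=
    Fintype.exists_ne_map_eq_of_card_lt
      (fun i : Fin (k + 1) => (⟨w i, hwfib i⟩ : (π' ⁻¹' {y₀} : Set Y)))
      (by rw [Fintype.card_fin, ← Nat.card_eq_fintype_card, Nat.card_coe_set_eq]; omega)
  have hwij' : w i = w j := congrArg Subtype.val hwij
  -- φ (xs i) and φ (xs j) are proximal in Y
  have hproxY : Proximal G (φ (xs i)) (φ (xs j)) := by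
    intro ε hε
    have hd : Tendsto (fun n : ℕ => dist (u (σ n) i) (u (σ n) j)) atTop
        (𝓝 (dist (w i) (w j))) := (hwc i).dist (hwc j)
    rw [hwij', dist_self] at hd
    have he : ∀ᶠ n in atTop, dist (u (σ n) i) (u (σ n) j) < ε :=
      hd.eventually_lt_const hε
    obtain ⟨n, hn⟩ := he.exists
    exact ⟨g (σ n), hn⟩
  exact ⟨i, j, hij, proximal_lift φ hφ.1 hφ.2.2 hprox _ _ hproxY⟩
end

section
/- Let G be a group acting continuously and minimally on a compact metric space X, and m ≥ 2. If (x₁,…,x_m) ∈ Q_m(X,G) and U₁ × ⋯ × U_m is a product of open neighborhoods of (x₁,…,x_m), then ⋂_{i=1}^m N(U₁, U_i) ≠ ∅, where N(U,V) = { g ∈ G : U ∩ g·V ≠ ∅ }. -/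
open Metric Pointwise

/-- For a minimal action, if `(x₁,…,x_m) ∈ Q_m(X,G)` and `U i` are open
neighborhoods of the `x i`, then `⋂ i N(U 0, U i) ≠ ∅`, where
`N(U,V) = {g : U ∩ g • V ≠ ∅}`. -/
theorem exists_return_times_of_regProxTuple {G X : Type*} [Group G]
    [TopologicalSpace G] [MetricSpace X] [CompactSpace X] [MulAction G X]
    [ContinuousSMul G X] [MulAction.IsMinimal G X] (m : ℕ) (hm : 2 ≤ m)
    (xs : Fin m → X) (hx : RegProxTuple G m xs)
    (U : Fin m → Set X) (hUopen : ∀ i, IsOpen (U i)) (hmem : ∀ i, xs i ∈ U i) :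
    ∃ g : G, ∀ i, (U ⟨0, by omega⟩ ∩ g • U i).Nonempty := by
  set i0 : Fin m := ⟨0, by omega⟩ with hi0
  -- finite cover of X by translates of U i0
  obtain ⟨I, hI⟩ := isCompact_univ.exists_finite_cover_smul (G := G)
    (hUopen i0) ⟨xs i0, hmem i0⟩
  -- Lebesgue number δ
  obtain ⟨δ, hδ, hleb⟩ := lebesgue_number_lemma_of_metric (s := (Set.univ : Set X))
    (c := fun g : I => (g : G) • U i0) isCompact_univ
    (fun g => (hUopen i0).smul _)
    (by intro x hx'; have := hI hx'; simp only [Set.mem_iUnion] at this ⊢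
        obtain ⟨g, hg, hgx⟩ := this; exact ⟨⟨g, hg⟩, hgx⟩)
  -- radii around the x i
  have hr : ∀ i, ∃ r > (0:ℝ), ball (xs i) r ⊆ U i := fun i =>
    (Metric.isOpen_iff.1 (hUopen i)) _ (hmem i)
  choose r hrpos hrsub using hr
  haveI : NeZero m := ⟨by omega⟩
  set ε : ℝ := min δ (Finset.univ.inf' ⟨i0, Finset.mem_univ _⟩ r) with hε
  have hεpos : 0 < ε := lt_min hδ (by
    apply Finset.lt_inf'_iff _ |>.2
    intro i _; exact hrpos i)
  obtain ⟨x', hclose, g, hprox⟩ := hx ε hεpos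
  have hx'U : ∀ i, x' i ∈ U i := by
    intro i
    apply hrsub i
    have : ε ≤ r i := le_trans (min_le_right _ _)
      (Finset.inf'_le _ (Finset.mem_univ i))
    simpa [mem_ball, dist_comm] using lt_of_lt_of_le (hclose i) this
  obtain ⟨j, hj⟩ := hleb (g • x' i0) (Set.mem_univ _)
  refine ⟨(j : G)⁻¹ * g, fun i => ?_⟩
  refine ⟨((j : G)⁻¹ * g) • x' i, ?_, Set.smul_mem_smul_set (hx'U i)⟩
  have h1 : g • x' i ∈ ball (g • x' i0) δ := by
    have := hprox i0 i
    simpa [mem_ball, dist_comm] using lt_of_lt_of_le this (min_le_left _ _)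
  have h2 : g • x' i ∈ (j : G) • U i0 := hj h1
  rw [mul_smul]
  exact (Set.mem_smul_set_iff_inv_smul_mem).1 h2
end

section
/- Let G be an abelian group acting continuously and minimally on compact metric spaces X and X′ with factor map π : X → X′, and m ≥ 2. If π is an m-MEF map (every fiber of the maximal equicontinuous factor map of X is a union of at most m−1 fibers of π), then (X′,G) is m-equicontinuous. -/
open Metric

universe u

/-- If `π : X → X'` is an `m`-MEF map (every fiber of the maximal equicontinuous
factor map of `X` is a union of at most `m - 1` fibers of `π`), then `(X',G)` is
`m`-equicontinuous, i.e. every `m`-regionally proximal tuple in `X'` has two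
equal coordinates. -/
theorem mEquicontinuous_of_mMEF {G : Type*} [CommGroup G] [TopologicalSpace G]
    {X X' Xeq : Type u} [MetricSpace X] [MetricSpace X'] [MetricSpace Xeq]
    [CompactSpace X] [CompactSpace X'] [MulAction G X] [MulAction G X']
    [MulAction G Xeq] [ContinuousSMul G X] [ContinuousSMul G X']
    [MulAction.IsMinimal G X] [MulAction.IsMinimal G X']
    (πeq : X → Xeq) (hπeq : IsMaxEqFactor G πeq)
    (π : X → X') (hπ : IsFactorMap G π) (m : ℕ) (hm : 2 ≤ m)
    (hmef : ∀ a : Xeq, ∃ bs : Fin (m - 1) → X',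
      πeq ⁻¹' {a} = ⋃ i, π ⁻¹' {bs i}) :
    ∀ xs' : Fin m → X', RegProxTuple G m xs' → ∃ i j, i ≠ j ∧ xs' i = xs' j := by
  intro xs' hrp
  obtain ⟨hπeqC, hπeqS, hπeqE⟩ := hπeq.1
  obtain ⟨hπC, hπS, hπE⟩ := hπ
  -- π-fibers are contained in πeq-fibers
  have fiber : ∀ w w' : X, π w = π w' → πeq w = πeq w' := by
    intro w w' h
    obtain ⟨bs, hbs⟩ := hmef (πeq w)
    have hw : w ∈ πeq ⁻¹' {πeq w} := rfl
    rw [hbs] at hw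
    obtain ⟨k, hk⟩ := Set.mem_iUnion.1 hw
    have hw' : w' ∈ πeq ⁻¹' {πeq w} := by
      rw [hbs]
      exact Set.mem_iUnion.2 ⟨k, by
        simp only [Set.mem_preimage, Set.mem_singleton_iff] at hk ⊢
        rw [← h]; exact hk⟩
    simpa using hw'.symm
  -- approximating sequences, lifted to X
  have H : ∀ n : ℕ, ∃ (y : Fin m → X) (g : G),
      (∀ i, dist (xs' i) (π (y i)) < 1 / (n + 1)) ∧
      (∀ i j, dist (g • π (y i)) (g • π (y j)) < 1 / (n + 1)) := by
    intro n
    have hpos : (0:ℝ) < 1 / (n + 1) := by positivity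
    obtain ⟨x'', hclose, g, hg⟩ := hrp (1 / (n + 1)) hpos
    choose y hy using fun i => hπS (x'' i)
    exact ⟨y, g, fun i => by rw [hy]; exact hclose i,
      fun i j => by rw [hy, hy]; exact hg i j⟩
  choose y g hy hg using H
  -- extract a convergent subsequence
  set s : ℕ → (Fin m → X) × (Fin m → X) :=
    fun n => (y n, fun i => g n • y n i) with hsdef
  obtain ⟨L, -, φ, hφmono, hφlim⟩ :=
    isCompact_univ.tendsto_subseq (fun n => Set.mem_univ (s n))
  have h1 : ∀ i, Filter.Tendsto (fun n => y (φ n) i) Filter.atTop (nhds (L.1 i)) :=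
    fun i => (((continuous_apply i).comp continuous_fst).tendsto L).comp hφlim
  have h2 : ∀ i, Filter.Tendsto (fun n => g (φ n) • y (φ n) i) Filter.atTop (nhds (L.2 i)) :=
    fun i => (((continuous_apply i).comp continuous_snd).tendsto L).comp hφlim
  have hεlim : Filter.Tendsto (fun n : ℕ => 1 / ((φ n : ℝ) + 1)) Filter.atTop (nhds 0) :=
    tendsto_one_div_add_atTop_nhds_zero_nat.comp hφmono.tendsto_atTop
  -- (A) the limit first component lifts xs'
  have hA : ∀ i, π (L.1 i) = xs' i := by
    intro i
    have hc : Filter.Tendsto (fun n => π (y (φ n) i)) Filter.atTop (nhds (π (L.1 i))) :=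
      (hπC.tendsto _).comp (h1 i)
    have hd : Filter.Tendsto (fun n => dist (xs' i) (π (y (φ n) i))) Filter.atTop
        (nhds (dist (xs' i) (π (L.1 i)))) := tendsto_const_nhds.dist hc
    have hle : dist (xs' i) (π (L.1 i)) ≤ 0 :=
      le_of_tendsto_of_tendsto' hd hεlim (fun n => (hy (φ n) i).le)
    exact (dist_le_zero.1 hle).symm
  -- (B) the limit second component lies in a single π-fiber
  have hB : ∀ i j, π (L.2 i) = π (L.2 j) := by
    intro i j
    have hci : Filter.Tendsto (fun n => π (g (φ n) • y (φ n) i)) Filter.atTop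
        (nhds (π (L.2 i))) := (hπC.tendsto _).comp (h2 i)
    have hcj : Filter.Tendsto (fun n => π (g (φ n) • y (φ n) j)) Filter.atTop
        (nhds (π (L.2 j))) := (hπC.tendsto _).comp (h2 j)
    have hd : Filter.Tendsto
        (fun n => dist (π (g (φ n) • y (φ n) i)) (π (g (φ n) • y (φ n) j)))
        Filter.atTop (nhds (dist (π (L.2 i)) (π (L.2 j)))) := hci.dist hcj
    have hle : dist (π (L.2 i)) (π (L.2 j)) ≤ 0 := by
      refine le_of_tendsto_of_tendsto' hd hεlim (fun n => ?_)
      rw [hπE, hπE]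
      exact (hg (φ n) i j).le
    exact dist_le_zero.1 hle
  -- (C) hence in a single πeq-fiber
  have hC : ∀ i j, πeq (L.2 i) = πeq (L.2 j) := fun i j => fiber _ _ (hB i j)
  -- (D) the limit first component lies in a single πeq-fiber
  have hD : ∀ i j, πeq (L.1 i) = πeq (L.1 j) := by
    intro i j
    have hci : Filter.Tendsto (fun n => πeq (y (φ n) i)) Filter.atTop
        (nhds (πeq (L.1 i))) := (hπeqC.tendsto _).comp (h1 i)
    have hcj : Filter.Tendsto (fun n => πeq (y (φ n) j)) Filter.atTop
        (nhds (πeq (L.1 j))) := (hπeqC.tendsto _).comp (h1 j)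
    have hd : Filter.Tendsto (fun n => dist (πeq (y (φ n) i)) (πeq (y (φ n) j)))
        Filter.atTop (nhds (dist (πeq (L.1 i)) (πeq (L.1 j)))) := hci.dist hcj
    -- distances of images under g tend to 0
    have hgi : Filter.Tendsto (fun n => πeq (g (φ n) • y (φ n) i)) Filter.atTop
        (nhds (πeq (L.2 i))) := (hπeqC.tendsto _).comp (h2 i)
    have hgj : Filter.Tendsto (fun n => πeq (g (φ n) • y (φ n) j)) Filter.atTop
        (nhds (πeq (L.2 j))) := (hπeqC.tendsto _).comp (h2 j)
    have hgd : Filter.Tendsto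
        (fun n => dist (πeq (g (φ n) • y (φ n) i)) (πeq (g (φ n) • y (φ n) j)))
        Filter.atTop (nhds 0) := by
      have := hgi.dist hgj
      rwa [hC i j, dist_self] at this
    have key : dist (πeq (L.1 i)) (πeq (L.1 j)) ≤ 0 := by
      refine le_of_forall_pos_le_add (fun ε hε => ?_)
      obtain ⟨δ, hδ, heq⟩ := hπeq.2.1 ε hε
      have hev : ∀ᶠ n in Filter.atTop,
          dist (πeq (g (φ n) • y (φ n) i)) (πeq (g (φ n) • y (φ n) j)) < δ :=
        hgd.eventually (eventually_lt_nhds hδ)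
      have hev2 : ∀ᶠ n in Filter.atTop,
          dist (πeq (y (φ n) i)) (πeq (y (φ n) j)) < ε := by
        refine hev.mono (fun n hn => ?_)
        have := heq _ _ hn (g (φ n))⁻¹
        rwa [hπeqE, hπeqE, inv_smul_smul, inv_smul_smul] at this
      have : dist (πeq (L.1 i)) (πeq (L.1 j)) ≤ ε :=
        le_of_tendsto hd (hev2.mono fun n hn => hn.le)
      linarith
    exact dist_le_zero.1 key
  -- pigeonhole using the m-MEF condition
  have h0m : 0 < m := by omega
  let i0 : Fin m := ⟨0, h0m⟩
  obtain ⟨bs, hbs⟩ := hmef (πeq (L.1 i0))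
  have hmem : ∀ i, ∃ k, π (L.1 i) = bs k := by
    intro i
    have : L.1 i ∈ πeq ⁻¹' {πeq (L.1 i0)} := by
      simp [Set.mem_preimage, hD i i0]
    rw [hbs] at this
    obtain ⟨k, hk⟩ := Set.mem_iUnion.1 this
    exact ⟨k, hk⟩
  choose k hk using hmem
  obtain ⟨i, j, hij, hkij⟩ := Fintype.exists_ne_map_eq_of_card_lt k (by
    simp only [Fintype.card_fin]; omega)
  exact ⟨i, j, hij, by rw [← hA i, ← hA j, hk i, hk j, hkij]⟩
end

section
/- Let G be a group acting continuously and minimally on a compact metric space X, and m ≥ 2. If (X,G) is not m-equicontinuous, then there exists a tuple (y₁,…,y_m) ∈ Q_m(X,G) with all coordinates pairwise distinct; moreover the y_i can be chosen with pairwise distances at least some ε > 0. -/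
open Metric

/-- If a minimal action is not `m`-equicontinuous, then there is an
`m`-regionally proximal tuple whose coordinates are pairwise at distance at
least some `ε > 0` (in particular pairwise distinct). -/
theorem exists_separated_regProxTuple_of_not_mEquicontinuous {G X : Type*}
    [Group G] [TopologicalSpace G] [MetricSpace X] [CompactSpace X] [MulAction G X]
    [ContinuousSMul G X] [MulAction.IsMinimal G X] (m : ℕ) (hm : 2 ≤ m)
    (hne : ¬ ∀ x : X, IsEqPoint G m x) :
    ∃ ε > (0:ℝ), ∃ ys : Fin m → X, RegProxTuple G m ys ∧
      ∀ i j, i ≠ j → ε ≤ dist (ys i) (ys j) := by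
  simp only [IsEqPoint] at hne
  push_neg at hne
  obtain ⟨x, ε, hε, hx⟩ := hne
  choose xs hxs g hg using fun n : ℕ => hx (1/(n+1)) (by positivity)
  set F : ℕ → Fin m → X := fun n i => g n • xs n i with hF
  obtain ⟨ys, -, φ, hφ, hlim⟩ := isCompact_univ.tendsto_subseq
    (x := F) (fun n => Set.mem_univ _)
  refine ⟨ε, hε, ys, ?_, ?_⟩
  · intro ε' hε'
    obtain ⟨N₁, hN₁⟩ := (Metric.tendsto_atTop.mp hlim) ε' hε'
    obtain ⟨N₂, hN₂⟩ := exists_nat_one_div_lt (half_pos hε')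
    set n := max N₁ N₂ with hn
    refine ⟨F (φ n), fun i => ?_, (g (φ n))⁻¹, fun i j => ?_⟩
    · calc dist (ys i) (F (φ n) i) = dist (F (φ n) i) (ys i) := dist_comm _ _
        _ ≤ dist (F (φ n)) ys := dist_le_pi_dist _ _ _
        _ < ε' := hN₁ n (le_max_left _ _)
    · have key : ∀ k, dist (xs (φ n) k) x < ε' / 2 := by
        intro k
        have h1 : (1:ℝ)/(φ n + 1) ≤ 1/(n + 1) := by
          apply one_div_le_one_div_of_le (by positivity)
          have h := hφ.le_apply (x := n)
          have : (n:ℝ) ≤ φ n := by exact_mod_cast h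
          linarith
        have h2 : (1:ℝ)/(n + 1) < ε' / 2 := by
          have := hN₂
          have hle : (1:ℝ)/(n + 1) ≤ 1/(N₂ + 1) := by
            apply one_div_le_one_div_of_le (by positivity)
            have : (N₂:ℝ) ≤ n := by exact_mod_cast le_max_right N₁ N₂
            linarith
          linarith
        calc dist (xs (φ n) k) x < 1/(φ n + 1) := hxs (φ n) k
          _ < ε' / 2 := lt_of_le_of_lt h1 h2
      have e1 : (g (φ n))⁻¹ • F (φ n) i = xs (φ n) i := inv_smul_smul _ _
      have e2 : (g (φ n))⁻¹ • F (φ n) j = xs (φ n) j := inv_smul_smul _ _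
      rw [e1, e2]
      calc dist (xs (φ n) i) (xs (φ n) j)
          ≤ dist (xs (φ n) i) x + dist (xs (φ n) j) x := dist_triangle_right _ _ _
        _ < ε' / 2 + ε' / 2 := add_lt_add (key i) (key j)
        _ = ε' := add_halves _
  · intro i j hij
    have hti : Filter.Tendsto (fun k => F (φ k) i) Filter.atTop (nhds (ys i)) :=
      tendsto_pi_nhds.mp hlim i
    have htj : Filter.Tendsto (fun k => F (φ k) j) Filter.atTop (nhds (ys j)) :=
      tendsto_pi_nhds.mp hlim j
    exact ge_of_tendsto' (hti.dist htj) (fun k => hg (φ k) i j hij)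
end
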